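/- Let s and r be bases, let a be a positive integer, and let ε be a real number with 0 < ε < 1. There exist a finite family F of subintervals of [0,1] and a positive integer ℓ₀ such that for all ℓ ≥ ℓ₀ and all real numbers ξ₀ and ξ with ξ ∈ [ξ₀, ξ₀ + s^{−⟨a+ℓ;s⟩}): if D(F, ({r^j ξ₀} : ⟨a;r⟩ < j ≤ ⟨a+ℓ;r⟩)) < (ε/10)⁴, then D({r^j ξ} : ⟨a;r⟩ < j ≤ ⟨a+ℓ;r⟩) < ε. -/

import Mathlib

open Finset Real

/-- `⟨b;r⟩ = ⌈b / log r⌉` where `log` is the natural logarithm. -/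
noncomputable def bRad (b r : ℕ) : ℕ := ⌈(b : ℝ) / Real.log r⌉₊

/- `seqDisc ξ` is the discrepancy of a finite sequence of reals:
`D(ξ) = sup_{0 ≤ u < v ≤ 1} |#{n : u ≤ ξ n < v}/N − (v−u)|`. -/
open Classical in
noncomputable def seqDisc {N : ℕ} (ξ : Fin N → ℝ) : ℝ :=
  sSup { d : ℝ | ∃ u v : ℝ, 0 ≤ u ∧ u < v ∧ v ≤ 1 ∧
    d = |((Finset.univ.filter fun n : Fin N => u ≤ ξ n ∧ ξ n < v).card : ℝ) / N - (v - u)| }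

/- `famDisc F ξ` is the discrepancy of `ξ` for the finite family `F` of semi-open
intervals, where `p ∈ F` represents the interval `[p.1, p.2)`. -/
open Classical in
noncomputable def famDisc {N : ℕ} (F : Finset (ℝ × ℝ)) (ξ : Fin N → ℝ) : ℝ :=
  sSup { d : ℝ | ∃ p ∈ F,
    d = |((Finset.univ.filter fun n : Fin N => p.1 ≤ ξ n ∧ ξ n < p.2).card : ℝ) / N
          - (p.2 - p.1)| }


/-! Write `x_j = {r^j ξ₀}` and `y_j = {r^j ξ}`. Then `y_j = {x_j + θ_j}` with
`θ_j = r^j (ξ - ξ₀)`, and the choice of the precision `s^{-⟨a+ℓ;s⟩}` makes `θ_j ≤ 1/m` for all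
but the last `m + 1` indices. A shift by at most `1/m` moves a point of `[u, v)` out of
`[u - 1/m, v)` only by wrapping around from `[1 - 1/m, 1)`, and counts in any interval are
controlled by counts in the grid intervals `[p/m, q/m)` up to an error `2/m`. Hence
`D(y) ≤ 2 D(grid, x) + 6/m + (m + 1)/N`, which is small once `m` and then `ℓ` are large. -/

section Frequency

variable {N : ℕ}

noncomputable def hits (ξ : Fin N → ℝ) (u v : ℝ) : Finset (Fin N) :=
  univ.filter fun n => u ≤ ξ n ∧ ξ n < v

noncomputable def freq (ξ : Fin N → ℝ) (u v : ℝ) : ℝ := #(hits ξ u v) / N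

lemma freq_nonneg (ξ : Fin N → ℝ) (u v : ℝ) : 0 ≤ freq ξ u v := by
  unfold freq; positivity

lemma freq_le_freq_of_subset {ξ : Fin N → ℝ} {u v u' v' : ℝ} (h : hits ξ u v ⊆ hits ξ u' v') :
    freq ξ u v ≤ freq ξ u' v' := by
  unfold freq; gcongr

lemma freq_eq_zero_of_le {ξ : Fin N → ℝ} {u v : ℝ} (h : v ≤ u) : freq ξ u v = 0 := by
  have : hits ξ u v = ∅ := filter_eq_empty_iff.2 fun n _ ⟨hu, hv⟩ => by linarith
  simp [freq, this]

lemma card_div_le_of_subset_union {ι : Type*} [DecidableEq ι] {s t t' : Finset ι}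
    (h : s ⊆ t ∪ t') {c : ℝ} (hc : 0 ≤ c) : (#s : ℝ) / c ≤ #t / c + #t' / c := by
  rw [← add_div]
  gcongr
  exact_mod_cast (card_le_card h).trans (card_union_le t t')

lemma le_famDisc {F : Finset (ℝ × ℝ)} (ξ : Fin N → ℝ) {I : ℝ × ℝ} (hI : I ∈ F) :
    |freq ξ I.1 I.2 - (I.2 - I.1)| ≤ famDisc F ξ := by
  refine le_csSup ?_ ⟨I, hI, rfl⟩
  refine ((F.finite_toSet.image fun I => |freq ξ I.1 I.2 - (I.2 - I.1)|).subset ?_).bddAbove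
  rintro _ ⟨J, hJ, rfl⟩
  exact ⟨J, hJ, rfl⟩

lemma seqDisc_le {ξ : Fin N → ℝ} {c : ℝ}
    (h : ∀ u v, 0 ≤ u → u < v → v ≤ 1 → |freq ξ u v - (v - u)| ≤ c) : seqDisc ξ ≤ c := by
  refine csSup_le ⟨_, 0, 1, le_rfl, one_pos, le_rfl, rfl⟩ ?_
  rintro _ ⟨u, v, hu, huv, hv, rfl⟩
  exact h u v hu huv hv

end Frequency

section Grid

noncomputable def gridFamily (m : ℕ) : Finset (ℝ × ℝ) :=
  ((range (m + 1) ×ˢ range (m + 1)).filter fun pq => pq.1 < pq.2).image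
    fun pq => ((pq.1 : ℝ) / m, (pq.2 : ℝ) / m)

variable {m : ℕ}

lemma mem_gridFamily {p q : ℕ} (hpq : p < q) (hqm : q ≤ m) :
    ((p : ℝ) / m, (q : ℝ) / m) ∈ gridFamily m :=
  mem_image.2 ⟨(p, q), mem_filter.2 ⟨mem_product.2 ⟨by simp; omega, by simp; omega⟩, hpq⟩, rfl⟩

lemma gridFamily_subset_unitInterval (hm : 0 < m) :
    ∀ I ∈ gridFamily m, 0 ≤ I.1 ∧ I.1 < I.2 ∧ I.2 ≤ 1 := by
  simp only [gridFamily, mem_image, mem_filter, mem_product, mem_range]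
  rintro _ ⟨⟨p, q⟩, ⟨⟨-, hq⟩, hpq⟩, rfl⟩
  have hmR : (0 : ℝ) < m := by exact_mod_cast hm
  refine ⟨by positivity, div_lt_div_of_pos_right (by exact_mod_cast hpq) hmR, ?_⟩
  rw [div_le_one hmR]
  exact_mod_cast Nat.lt_succ_iff.1 hq

variable {N : ℕ} {x : Fin N → ℝ} {u v : ℝ}

lemma famDisc_gridFamily_nonneg (hm : 0 < m) (x : Fin N → ℝ) : 0 ≤ famDisc (gridFamily m) x :=
  (abs_nonneg _).trans (le_famDisc x (mem_gridFamily zero_lt_one hm))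

lemma freq_le_of_famDisc_gridFamily (hm : 0 < m) (hx : ∀ i, 0 ≤ x i) (huv : u ≤ v)
    (hv : v ≤ 1) : freq x u v ≤ v - u + 2 / m + famDisc (gridFamily m) x := by
  have hmR : (0 : ℝ) < m := by exact_mod_cast hm
  set p := ⌊u * m⌋₊
  set q := ⌈v * m⌉₊
  have hsub : hits x u v ⊆ hits x (p / m) (q / m) := by
    simp only [hits, subset_iff, mem_filter, mem_univ, true_and]
    rintro i ⟨hui, hiv⟩
    constructor
    · rcases le_or_gt (u * m) 0 with hu | hu
      · simpa [p, Nat.floor_of_nonpos hu] using hx i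
      · exact (div_le_iff₀ hmR).2 (Nat.floor_le hu.le) |>.trans hui
    · exact hiv.trans_le ((le_div_iff₀ hmR).2 (Nat.le_ceil _))
  have hD := famDisc_gridFamily_nonneg hm x
  rcases le_or_gt q p with hqp | hpq
  · have : freq x (p / m) (q / m) = 0 := freq_eq_zero_of_le <|
      div_le_div_of_nonneg_right (by exact_mod_cast hqp) hmR.le
    have : (0 : ℝ) ≤ 2 / m := by positivity
    linarith [freq_le_freq_of_subset hsub]
  have hvm : 0 < v * m := Nat.ceil_pos.1 (p.zero_le.trans_lt hpq)
  have hqm : q ≤ m := Nat.ceil_le.2 (by nlinarith)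
  have hgrid := (abs_le.1 (le_famDisc x (mem_gridFamily hpq hqm))).2
  have hlen : (q : ℝ) / m - p / m ≤ v - u + 2 / m := by
    rw [← sub_div, div_le_iff₀ hmR]
    have := Nat.ceil_lt_add_one hvm.le
    have := Nat.sub_one_lt_floor (u * m)
    field_simp
    linarith
  linarith [freq_le_freq_of_subset hsub]

lemma le_freq_of_famDisc_gridFamily (hm : 0 < m) (hu : 0 ≤ u) (hv : v ≤ 1) :
    v - u - 2 / m - famDisc (gridFamily m) x ≤ freq x u v := by
  have hmR : (0 : ℝ) < m := by exact_mod_cast hm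
  set p := ⌈u * m⌉₊
  set q := ⌊v * m⌋₊
  have hp := Nat.ceil_lt_add_one (mul_nonneg hu hmR.le)
  have hq := Nat.sub_one_lt_floor (v * m)
  have hD := famDisc_gridFamily_nonneg hm x
  rcases le_or_gt q p with hqp | hpq
  · have : (v - u) * m < 2 := by
      have : (q : ℝ) ≤ p := by exact_mod_cast hqp
      linarith
    have : v - u < 2 / m := by rwa [lt_div_iff₀ hmR]
    linarith [freq_nonneg x u v]
  have hvm : 0 ≤ v * m := by
    have := Nat.floor_pos.1 (p.zero_le.trans_lt hpq)
    linarith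
  have hsub : hits x (p / m) (q / m) ⊆ hits x u v := by
    simp only [hits, subset_iff, mem_filter, mem_univ, true_and]
    rintro i ⟨hpi, hiq⟩
    exact ⟨((le_div_iff₀ hmR).2 (Nat.le_ceil _)).trans hpi,
      hiq.trans_le ((div_le_iff₀ hmR).2 (Nat.floor_le hvm))⟩
  have hqm : q ≤ m := Nat.floor_le_of_le (by nlinarith)
  have hgrid := (abs_le.1 (le_famDisc x (mem_gridFamily hpq hqm))).1
  have hlen : v - u - 2 / m ≤ (q : ℝ) / m - p / m := by
    rw [← sub_div, le_div_iff₀ hmR]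
    field_simp
    linarith
  linarith [freq_le_freq_of_subset hsub]

end Grid

lemma fract_add_eq_or {x θ : ℝ} (hx : 0 ≤ x) (hx1 : x < 1) (hθ : 0 ≤ θ) (hθ1 : θ ≤ 1) :
    Int.fract (x + θ) = x + θ ∨ Int.fract (x + θ) = x + θ - 1 := by
  rcases lt_or_ge (x + θ) 1 with h | h
  · exact Or.inl (Int.fract_eq_self.2 ⟨by linarith, h⟩)
  · exact Or.inr (Int.fract_eq_iff.2 ⟨by linarith, by linarith, 1, by ring⟩)

section Shift

variable {N m : ℕ} {x y : Fin N → ℝ} {bad : Finset (Fin N)}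

lemma seqDisc_le_of_fract_shift (hm : 0 < m) (hx0 : ∀ i, 0 ≤ x i) (hx1 : ∀ i, x i < 1)
    (hshift : ∀ i ∉ bad, ∃ θ : ℝ, 0 ≤ θ ∧ θ ≤ 1 / m ∧ y i = Int.fract (x i + θ)) :
    seqDisc y ≤ 2 * famDisc (gridFamily m) x + 6 / m + #bad / N := by
  have hδ : 1 / (m : ℝ) ≤ 1 := by rw [div_le_one (by positivity)]; exact_mod_cast hm
  have hδ0 : 0 ≤ 1 / (m : ℝ) := by positivity
  have hN : (0 : ℝ) ≤ N := N.cast_nonneg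
  refine seqDisc_le fun u v hu huv hv => abs_sub_le_iff.2 ⟨?_, ?_⟩
  · have hsub : hits y u v ⊆ (bad ∪ hits x (u - 1 / m) v) ∪ hits x (1 - 1 / m) 1 := by
      intro i hi
      simp only [hits, mem_union, mem_filter, mem_univ, true_and] at hi ⊢
      by_cases hi_bad : i ∈ bad
      · exact Or.inl (Or.inl hi_bad)
      obtain ⟨θ, hθ0, hθ1, hyi⟩ := hshift i hi_bad
      rcases fract_add_eq_or (hx0 i) (hx1 i) hθ0 (hθ1.trans hδ) with h | h <;> rw [hyi, h] at hi
      · exact Or.inl (Or.inr ⟨by linarith, by linarith⟩)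
      · exact Or.inr ⟨by linarith, hx1 i⟩
    have hcount : freq y u v ≤ (#bad / N + freq x (u - 1 / m) v) + freq x (1 - 1 / m) 1 := by
      unfold freq
      have h := card_div_le_of_subset_union hsub hN
      have h' := card_div_le_of_subset_union (subset_refl (bad ∪ hits x (u - 1 / m) v)) hN
      linarith
    have h1 := freq_le_of_famDisc_gridFamily hm hx0 (by linarith : u - 1 / m ≤ v) hv
    have h2 := freq_le_of_famDisc_gridFamily (x := x) hm hx0
      (by linarith : (1 : ℝ) - 1 / m ≤ 1) le_rfl
    have : (6 : ℝ) / m = 1 / m + 2 / m + 1 / m + 2 / m := by ring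
    linarith
  · have hsub : hits x u (v - 1 / m) ⊆ hits y u v ∪ bad := by
      intro i hi
      simp only [hits, mem_union, mem_filter, mem_univ, true_and] at hi ⊢
      by_cases hi_bad : i ∈ bad
      · exact Or.inr hi_bad
      obtain ⟨θ, hθ0, hθ1, hyi⟩ := hshift i hi_bad
      have := Int.fract_nonneg (x i + θ)
      rcases fract_add_eq_or (hx0 i) (hx1 i) hθ0 (hθ1.trans hδ) with h | h <;> rw [← hyi] at h
      · exact Or.inl ⟨by linarith, by linarith⟩
      · linarith
    have hcount : freq x u (v - 1 / m) ≤ freq y u v + #bad / N := by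
      unfold freq
      exact card_div_le_of_subset_union hsub hN
    have h1 := le_freq_of_famDisc_gridFamily hm hu (by linarith : v - 1 / m ≤ 1) (x := x)
    have := famDisc_gridFamily_nonneg hm x
    have : (6 : ℝ) / m = 1 / m + 2 / m + 3 * (1 / m) := by ring
    linarith

end Shift

lemma card_filter_sub_le_val_le {N : ℕ} (T : ℕ) :
    #(univ.filter fun i : Fin N => N - T ≤ i) ≤ T := by
  calc #(univ.filter fun i : Fin N => N - T ≤ i)
      = #((univ.filter fun i : Fin N => N - T ≤ i).map Fin.valEmbedding) := (card_map _).symm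
    _ ≤ #(Ico (N - T) N) := card_le_card fun k => by simp; omega
    _ ≤ T := by simp; omega

lemma fract_mul_eq_fract_fract_add (c ξ₀ ξ : ℝ) :
    Int.fract (c * ξ) = Int.fract (Int.fract (c * ξ₀) + c * (ξ - ξ₀)) := by
  rw [← Int.fract_intCast_add ⌊c * ξ₀⌋ (Int.fract _ + _), ← add_assoc, Int.floor_add_fract]
  ring_nf

section Radix

variable {b r s : ℕ}

lemma pow_lt_exp_of_lt_bRad (hr : 1 < r) {j : ℕ} (hj : j < bRad b r) : (r : ℝ) ^ j < exp b := by
  have hlog : 0 < log r := log_pos (by exact_mod_cast hr)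
  rw [← exp_log (by positivity : (0 : ℝ) < r ^ j), exp_lt_exp, log_pow, ← lt_div_iff₀ hlog]
  exact Nat.lt_ceil.1 hj

lemma exp_le_pow_bRad (hs : 1 < s) : exp b ≤ (s : ℝ) ^ bRad b s := by
  have hlog : 0 < log s := log_pos (by exact_mod_cast hs)
  rw [← exp_log (by positivity : (0 : ℝ) < s ^ bRad b s), exp_le_exp, log_pow, ← div_le_iff₀ hlog]
  exact Nat.le_ceil _

lemma le_bRad_add_sub_bRad (hr : 1 < r) (a : ℕ) {ℓ K : ℕ} (hℓ : r * K ≤ ℓ) :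
    K ≤ bRad (a + ℓ) r - bRad a r := by
  have hlog : 0 < log r := log_pos (by exact_mod_cast hr)
  have hJ : ((a + ℓ : ℕ) : ℝ) / log r ≤ bRad (a + ℓ) r := Nat.le_ceil _
  have hB : (bRad a r : ℝ) < a / log r + 1 := Nat.ceil_lt_add_one (by positivity)
  have hK : (K : ℝ) ≤ ℓ / log r := by
    rw [le_div_iff₀ hlog]
    calc (K : ℝ) * log r ≤ K * r := by
          gcongr; linarith [log_le_sub_one_of_pos (by positivity : (0 : ℝ) < r)]
      _ ≤ ℓ := by exact_mod_cast (mul_comm K r).trans_le hℓ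
  have : (K + bRad a r : ℝ) < bRad (a + ℓ) r + 1 := by
    push_cast [add_div] at hJ
    linarith
  have : K + bRad a r < bRad (a + ℓ) r + 1 := by exact_mod_cast this
  omega

lemma exists_fract_pow_mul_eq_fract_add (hs : 1 < s) (hr : 1 < r) {m j : ℕ} (hm : 0 < m)
    (hj : j + m < bRad b r) {ξ₀ ξ : ℝ} (hle : ξ₀ ≤ ξ) (hlt : ξ < ξ₀ + ((s : ℝ) ^ bRad b s)⁻¹) :
    ∃ θ : ℝ, 0 ≤ θ ∧ θ ≤ 1 / m ∧
      Int.fract ((r : ℝ) ^ j * ξ) = Int.fract (Int.fract ((r : ℝ) ^ j * ξ₀) + θ) := by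
  have hθ0 : 0 ≤ (r : ℝ) ^ j * (ξ - ξ₀) := by have := sub_nonneg.2 hle; positivity
  refine ⟨(r : ℝ) ^ j * (ξ - ξ₀), hθ0, ?_, fract_mul_eq_fract_fract_add _ _ _⟩
  have hmr : (m : ℝ) ≤ (r : ℝ) ^ m := by exact_mod_cast (Nat.lt_pow_self hr).le
  have hθ : (r : ℝ) ^ j * (ξ - ξ₀) * (r : ℝ) ^ m < 1 :=
    calc (r : ℝ) ^ j * (ξ - ξ₀) * (r : ℝ) ^ m = (r : ℝ) ^ (j + m) * (ξ - ξ₀) := by ring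
      _ < exp b * ((s : ℝ) ^ bRad b s)⁻¹ :=
        mul_lt_mul'' (pow_lt_exp_of_lt_bRad hr hj) (by linarith) (by positivity) (by linarith)
      _ ≤ 1 := by
        rw [← div_eq_mul_inv, div_le_one (by positivity)]
        exact exp_le_pow_bRad hs
  rw [le_div_iff₀ (by exact_mod_cast hm)]
  exact (mul_le_mul_of_nonneg_left hmr hθ0).trans hθ.le

end Radix

theorem stmt6_general (s r : ℕ) (hs : 2 ≤ s) (hr : 2 ≤ r) (a : ℕ)
    (ε : ℝ) (hε0 : 0 < ε) (hε1 : ε < 1) :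
    ∃ (F : Finset (ℝ × ℝ)) (ℓ₀ : ℕ),
      (∀ p ∈ F, 0 ≤ p.1 ∧ p.1 < p.2 ∧ p.2 ≤ 1) ∧ 0 < ℓ₀ ∧
      ∀ ℓ ≥ ℓ₀, ∀ ξ₀ ξ : ℝ,
        ξ₀ ≤ ξ → ξ < ξ₀ + ((s : ℝ) ^ bRad (a + ℓ) s)⁻¹ →
        famDisc F (fun i : Fin (bRad (a + ℓ) r - bRad a r) =>
            Int.fract ((r : ℝ) ^ (bRad a r + 1 + (i : ℕ)) * ξ₀)) < (ε / 10) ^ 4 →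
        seqDisc (fun i : Fin (bRad (a + ℓ) r - bRad a r) =>
            Int.fract ((r : ℝ) ^ (bRad a r + 1 + (i : ℕ)) * ξ)) < ε := by
  obtain ⟨m, hm⟩ := exists_nat_gt (24 / ε)
  obtain ⟨K, hK⟩ := exists_nat_gt (4 * (m + 1) / ε)
  have hm0 : 0 < m := by exact_mod_cast (by positivity : 0 < 24 / ε).trans hm
  have hK0 : 0 < K := by exact_mod_cast (by positivity : 0 < 4 * ((m : ℝ) + 1) / ε).trans hK
  refine ⟨gridFamily m, r * K, gridFamily_subset_unitInterval hm0, by positivity, ?_⟩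
  intro ℓ hℓ ξ₀ ξ hle hlt hfam
  set N := bRad (a + ℓ) r - bRad a r
  have hN : (K : ℝ) ≤ N := by exact_mod_cast le_bRad_add_sub_bRad hr a hℓ
  set bad := univ.filter fun i : Fin N => N - (m + 1) ≤ i
  have hdisc := seqDisc_le_of_fract_shift hm0 (fun _ => Int.fract_nonneg _)
    (fun _ => Int.fract_lt_one _) (bad := bad)
    fun i hi => exists_fract_pow_mul_eq_fract_add hs hr hm0
      (j := bRad a r + 1 + i) (by simp [bad] at hi; omega) hle hlt
  have hbad : (#bad : ℝ) / N < ε / 4 :=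
    calc (#bad : ℝ) / N ≤ ((m : ℝ) + 1) / K := by
          gcongr; exact_mod_cast card_filter_sub_le_val_le (m + 1)
      _ < ε / 4 := by
          rw [div_lt_iff₀ hε0] at hK
          rw [div_lt_iff₀ (by exact_mod_cast hK0)]
          linarith
  have h6 : 6 / (m : ℝ) < ε / 4 := by
    rw [div_lt_iff₀ hε0] at hm
    rw [div_lt_iff₀ (by positivity)]
    nlinarith
  have hη : (ε / 10) ^ 4 ≤ ε / 10 := pow_le_of_le_one (by positivity) (by linarith) (by norm_num)
  linarith

theorem stmt6 (s r : ℕ) (hs : 2 ≤ s) (hr : 2 ≤ r) (a : ℕ) (ha : 0 < a)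
    (ε : ℝ) (hε0 : 0 < ε) (hε1 : ε < 1) :
    ∃ (F : Finset (ℝ × ℝ)) (ℓ₀ : ℕ),
      (∀ p ∈ F, 0 ≤ p.1 ∧ p.1 < p.2 ∧ p.2 ≤ 1) ∧ 0 < ℓ₀ ∧
      ∀ ℓ ≥ ℓ₀, ∀ ξ₀ ξ : ℝ,
        ξ₀ ≤ ξ → ξ < ξ₀ + ((s : ℝ) ^ bRad (a + ℓ) s)⁻¹ →
        famDisc F (fun i : Fin (bRad (a + ℓ) r - bRad a r) =>
            Int.fract ((r : ℝ) ^ (bRad a r + 1 + (i : ℕ)) * ξ₀)) < (ε / 10) ^ 4 →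
        seqDisc (fun i : Fin (bRad (a + ℓ) r - bRad a r) =>
            Int.fract ((r : ℝ) ^ (bRad a r + 1 + (i : ℕ)) * ξ)) < ε :=
  stmt6_general s r hs hr a ε hε0 hε1
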